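/- Let w₀ ∈ ℝ^d, let Φ_t : ℝ^d × ℝ^p → ℝ^d for t = 1, …, T each be differentiable, define w_t(λ) = Φ_t(w_{t-1}(λ), λ) recursively with w_0(λ) = w₀, let E : ℝ^d × ℝ^p → ℝ be differentiable, and set f(λ) = E(w_T(λ), λ). Suppose there are nonnegative constants L_{A_t}, L_{B_t} for t = 1, …, T+1 such that, uniformly over all (w, λ) ∈ ℝ^d × ℝ^p, the operator norm of the partial Fréchet derivative of Φ_t with respect to its first argument is at most L_{A_t} and with respect to its second argument is at most L_{B_t} (for t ≤ T), and the operator norms of the partial Fréchet derivatives of E with respect to its first and second arguments are at most L_{A_{T+1}} and L_{B_{T+1}} respectively. Then f is Lipschitz continuous with Lipschitz constant at most Σ_{t=1}^{T+1} L_{B_t} · L_{A_{t+1}} · ⋯ · L_{A_{T+1}} (where the product of the L_{A}'s is empty, i.e. equal to 1, for t = T+1); that is, |f(λ₁) − f(λ₂)| ≤ (Σ_{t=1}^{T+1} L_{B_t} L_{A_{t+1}} ⋯ L_{A_{T+1}}) ‖λ₁ − λ₂‖ for all λ₁, λ₂ ∈ ℝ^p. -/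

import Mathlib

lemma aux_lip {E F : Type*} [NormedAddCommGroup E] [NormedSpace ℝ E]
    [NormedAddCommGroup F] [NormedSpace ℝ F] {g : E → F}
    (hg : Differentiable ℝ g) {C : ℝ} (hC : ∀ x, ‖fderiv ℝ g x‖ ≤ C) (x y : E) :
    ‖g x - g y‖ ≤ C * ‖x - y‖ := by
  have := Convex.norm_image_sub_le_of_norm_fderiv_le
    (fun z _ => (hg z)) (fun z _ => hC z) convex_univ (Set.mem_univ y) (Set.mem_univ x)
  simpa using this

lemma aux_joint {E F G : Type*} [NormedAddCommGroup E] [NormedSpace ℝ E]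
    [NormedAddCommGroup F] [NormedSpace ℝ F] [NormedAddCommGroup G] [NormedSpace ℝ G]
    {g : E × F → G} (hg : Differentiable ℝ g) {A B : ℝ}
    (hA : ∀ (v : E) (u : F), ‖fderiv ℝ (fun v' => g (v', u)) v‖ ≤ A)
    (hB : ∀ (v : E) (u : F), ‖fderiv ℝ (fun u' => g (v, u')) u‖ ≤ B)
    (v₁ v₂ : E) (u₁ u₂ : F) :
    ‖g (v₁, u₁) - g (v₂, u₂)‖ ≤ A * ‖v₁ - v₂‖ + B * ‖u₁ - u₂‖ := by
  have h1 : ‖g (v₁, u₁) - g (v₂, u₁)‖ ≤ A * ‖v₁ - v₂‖ := by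
    have hd : Differentiable ℝ (fun v' : E => g (v', u₁)) :=
      hg.comp (differentiable_id.prodMk (differentiable_const u₁))
    exact aux_lip hd (fun x => hA x u₁) v₁ v₂
  have h2 : ‖g (v₂, u₁) - g (v₂, u₂)‖ ≤ B * ‖u₁ - u₂‖ := by
    have hd : Differentiable ℝ (fun u' : F => g (v₂, u')) :=
      hg.comp ((differentiable_const v₂).prodMk differentiable_id)
    exact aux_lip hd (fun x => hB v₂ x) u₁ u₂
  calc ‖g (v₁, u₁) - g (v₂, u₂)‖
      ≤ ‖g (v₁, u₁) - g (v₂, u₁)‖ + ‖g (v₂, u₁) - g (v₂, u₂)‖ := norm_sub_le_norm_sub_add_norm_sub _ _ _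
    _ ≤ A * ‖v₁ - v₂‖ + B * ‖u₁ - u₂‖ := add_le_add h1 h2

lemma aux_K (LA LB : ℕ → ℝ) (t : ℕ) :
    ∑ s ∈ Finset.Icc 1 (t + 1), LB s * ∏ r ∈ Finset.Icc (s + 1) (t + 1), LA r
      = LA (t + 1) * (∑ s ∈ Finset.Icc 1 t, LB s * ∏ r ∈ Finset.Icc (s + 1) t, LA r)
        + LB (t + 1) := by
  rw [Finset.sum_Icc_succ_top (by omega : 1 ≤ t + 1)]
  have h : ∀ s ∈ Finset.Icc 1 t, LB s * ∏ r ∈ Finset.Icc (s + 1) (t + 1), LA r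
      = LA (t + 1) * (LB s * ∏ r ∈ Finset.Icc (s + 1) t, LA r) := by
    intro s hs
    have hs' : s + 1 ≤ t + 1 := by
      have := (Finset.mem_Icc.mp hs).2; omega
    rw [Finset.prod_Icc_succ_top hs']; ring
  rw [Finset.sum_congr rfl h, ← Finset.mul_sum,
    Finset.Icc_eq_empty (by omega : ¬ t + 1 + 1 ≤ t + 1)]
  simp

/-- If the partial Fréchet derivatives of the steps `Φ t` (for
`t = 1, …, T`) and of the outer objective `E` are uniformly bounded in operator norm by
constants `L_{A_t}` and `L_{B_t}` (for `t = 1, …, T+1`), then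
`f (λ) = E (w_T (λ), λ)` is Lipschitz continuous with constant at most
`∑_{t=1}^{T+1} L_{B_t} · L_{A_{t+1}} ⋯ L_{A_{T+1}}`. -/
theorem lipschitz_bilevel_objective
    (d p T : ℕ) (w₀ : EuclideanSpace ℝ (Fin d))
    (Φ : ℕ → EuclideanSpace ℝ (Fin d) × EuclideanSpace ℝ (Fin p) → EuclideanSpace ℝ (Fin d))
    (hΦ : ∀ t ∈ Finset.Icc 1 T, Differentiable ℝ (Φ t))
    (w : ℕ → EuclideanSpace ℝ (Fin p) → EuclideanSpace ℝ (Fin d))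
    (hw0 : ∀ lam, w 0 lam = w₀)
    (hwrec : ∀ t ∈ Finset.Icc 1 T, ∀ lam, w t lam = Φ t (w (t - 1) lam, lam))
    (Eo : EuclideanSpace ℝ (Fin d) × EuclideanSpace ℝ (Fin p) → ℝ)
    (hEo : Differentiable ℝ Eo)
    (f : EuclideanSpace ℝ (Fin p) → ℝ)
    (hf : ∀ lam, f lam = Eo (w T lam, lam))
    (LA LB : ℕ → ℝ)
    (hLA0 : ∀ t ∈ Finset.Icc 1 (T + 1), 0 ≤ LA t)
    (hLB0 : ∀ t ∈ Finset.Icc 1 (T + 1), 0 ≤ LB t)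
    (hLA : ∀ t ∈ Finset.Icc 1 T, ∀ (v : EuclideanSpace ℝ (Fin d))
      (u : EuclideanSpace ℝ (Fin p)),
      ‖fderiv ℝ (fun v' => Φ t (v', u)) v‖ ≤ LA t)
    (hLB : ∀ t ∈ Finset.Icc 1 T, ∀ (v : EuclideanSpace ℝ (Fin d))
      (u : EuclideanSpace ℝ (Fin p)),
      ‖fderiv ℝ (fun u' => Φ t (v, u')) u‖ ≤ LB t)
    (hLA' : ∀ (v : EuclideanSpace ℝ (Fin d)) (u : EuclideanSpace ℝ (Fin p)),
      ‖fderiv ℝ (fun v' => Eo (v', u)) v‖ ≤ LA (T + 1))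
    (hLB' : ∀ (v : EuclideanSpace ℝ (Fin d)) (u : EuclideanSpace ℝ (Fin p)),
      ‖fderiv ℝ (fun u' => Eo (v, u')) u‖ ≤ LB (T + 1)) :
    ∀ lam₁ lam₂ : EuclideanSpace ℝ (Fin p),
      |f lam₁ - f lam₂| ≤
        (∑ t ∈ Finset.Icc 1 (T + 1), LB t * ∏ s ∈ Finset.Icc (t + 1) (T + 1), LA s) *
          ‖lam₁ - lam₂‖ := by
  set K : ℕ → ℝ := fun t => ∑ s ∈ Finset.Icc 1 t, LB s * ∏ r ∈ Finset.Icc (s + 1) t, LA r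
    with hK
  have key : ∀ t, t ≤ T → ∀ l₁ l₂ : EuclideanSpace ℝ (Fin p),
      ‖w t l₁ - w t l₂‖ ≤ K t * ‖l₁ - l₂‖ := by
    intro t
    induction t with
    | zero =>
      intro _ l₁ l₂
      simp [hK, hw0 l₁, hw0 l₂]
    | succ t ih =>
      intro ht l₁ l₂
      have ht1 : t + 1 ∈ Finset.Icc 1 T := by simp; omega
      have hLAnn : (0:ℝ) ≤ LA (t + 1) := hLA0 (t + 1) (by simp; omega)
      have hb := aux_joint (hΦ (t + 1) ht1) (hLA (t + 1) ht1) (hLB (t + 1) ht1)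
        (w t l₁) (w t l₂) l₁ l₂
      have hKt := ih (by omega) l₁ l₂
      calc ‖w (t + 1) l₁ - w (t + 1) l₂‖
          = ‖Φ (t + 1) (w t l₁, l₁) - Φ (t + 1) (w t l₂, l₂)‖ := by
            rw [hwrec (t + 1) ht1 l₁, hwrec (t + 1) ht1 l₂]
            simp
        _ ≤ LA (t + 1) * ‖w t l₁ - w t l₂‖ + LB (t + 1) * ‖l₁ - l₂‖ := hb
        _ ≤ LA (t + 1) * (K t * ‖l₁ - l₂‖) + LB (t + 1) * ‖l₁ - l₂‖ := by
            gcongr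
        _ = K (t + 1) * ‖l₁ - l₂‖ := by
            rw [hK]; simp only []
            rw [aux_K LA LB t]; ring
  intro lam₁ lam₂
  have hb := aux_joint hEo hLA' hLB' (w T lam₁) (w T lam₂) lam₁ lam₂
  have hKt := key T le_rfl lam₁ lam₂
  have hLAnn : (0:ℝ) ≤ LA (T + 1) := hLA0 (T + 1) (by simp)
  calc |f lam₁ - f lam₂|
      = ‖Eo (w T lam₁, lam₁) - Eo (w T lam₂, lam₂)‖ := by
        rw [hf lam₁, hf lam₂, Real.norm_eq_abs]
    _ ≤ LA (T + 1) * ‖w T lam₁ - w T lam₂‖ + LB (T + 1) * ‖lam₁ - lam₂‖ := hb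
    _ ≤ LA (T + 1) * (K T * ‖lam₁ - lam₂‖) + LB (T + 1) * ‖lam₁ - lam₂‖ := by gcongr
    _ = (∑ t ∈ Finset.Icc 1 (T + 1), LB t * ∏ s ∈ Finset.Icc (t + 1) (T + 1), LA s) *
          ‖lam₁ - lam₂‖ := by
        rw [aux_K LA LB T, hK]; ring
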